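/- Let S be a real n×N matrix with full row rank n, and let Δ_S = max_{1≤j≤N} ‖S e_j‖ denote its radius (the maximum Euclidean norm of its columns). Let x⁰ ∈ ℝⁿ and let f : ℝⁿ → ℝ be twice continuously differentiable on an open set containing the closed ball B(x⁰; Δ_S), with ∇f Lipschitz continuous with constant L_{∇f} on B(x⁰; Δ_S). Define the generalized simplex gradient ∇_s f(x⁰;S) = (S Sᵀ)⁻¹ S δ_f(x⁰;S), where δ_f(x⁰;S) ∈ ℝᴺ has j-th entry f(x⁰ + S e_j) − f(x⁰). Let Ŝ = S/Δ_S. Then ‖∇_s f(x⁰;S) − ∇f(x⁰)‖ ≤ (√N / 2) · L_{∇f} · ‖(Ŝ Ŝᵀ)⁻¹ Ŝ‖ · Δ_S, where the matrix norm is the operator norm induced by the Euclidean norm. -/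

import Mathlib

noncomputable section

/-- Interpret a plain vector in `Fin n → ℝ` as an element of Euclidean space,
so that `‖·‖` is the Euclidean norm. -/
def vecE {n : ℕ} (v : Fin n → ℝ) : EuclideanSpace ℝ (Fin n) :=
  (EuclideanSpace.equiv (Fin n) ℝ).symm v

/-- The operator norm of a matrix induced by the Euclidean norms. -/
def l2opNorm {m n : ℕ} (A : Matrix (Fin m) (Fin n) ℝ) : ℝ :=
  ‖LinearMap.toContinuousLinearMap (Matrix.toEuclideanLin A)‖

/-! Because `(SSᵀ)⁻¹S Sᵀ = 1`, the error `∇ₛf(x⁰;S) - ∇f(x⁰)` equals `(SSᵀ)⁻¹S (δ_f - Sᵀ∇f(x⁰))`.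
Each entry of `δ_f - Sᵀ∇f(x⁰)` is a first-order Taylor remainder along a column of `S`, at most
`L Δ_S² / 2` in absolute value since `∇f` is `L`-Lipschitz, so `‖δ_f - Sᵀ∇f(x⁰)‖ ≤ √N L Δ_S² / 2`.
Finally `(ŜŜᵀ)⁻¹Ŝ = Δ_S (SSᵀ)⁻¹S`, which turns one factor `Δ_S` into the operator norm. -/

open Set Matrix

theorem abs_le_half_of_abs_deriv_le_mul {g g' : ℝ → ℝ} {K : ℝ}
    (hg : ∀ t ∈ Icc (0 : ℝ) 1, HasDerivAt g (g' t) t) (hg0 : g 0 = 0)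
    (hg' : ∀ t ∈ Ico (0 : ℝ) 1, |g' t| ≤ K * t) : |g 1| ≤ K / 2 := by
  have hB : ∀ t, HasDerivAt (fun s : ℝ => K / 2 * s ^ 2) (K * t) t := fun t => by
    simpa [mul_comm, mul_left_comm, mul_assoc] using
      ((hasDerivAt_pow 2 t).const_mul (K / 2)).congr_deriv (by ring)
  have := image_norm_le_of_norm_deriv_right_le_deriv_boundary (f := g) (a := 0) (b := 1)
    (fun t ht => (hg t ht).continuousAt.continuousWithinAt)
    (fun t ht => (hg t (Ico_subset_Icc_self ht)).hasDerivWithinAt) (by simp [hg0]) hB hg'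
    (right_mem_Icc.mpr zero_le_one)
  simpa using this

theorem abs_sub_sub_inner_gradient_le {E : Type*} [NormedAddCommGroup E] [InnerProductSpace ℝ E]
    [CompleteSpace E] {f : E → ℝ} {s : Set E} {L : NNReal} (hs : Convex ℝ s)
    (hf : ∀ y ∈ s, DifferentiableAt ℝ f y) (hlip : LipschitzOnWith L (gradient f) s)
    {x v : E} (hx : x ∈ s) (hxv : x + v ∈ s) :
    |f (x + v) - f x - inner ℝ (gradient f x) v| ≤ L / 2 * ‖v‖ ^ 2 := by
  have hseg : ∀ t ∈ Icc (0 : ℝ) 1, x + t • v ∈ s := fun t ht => by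
    simpa [add_sub_cancel_left] using hs.add_smul_sub_mem hx hxv ht
  have hderiv : ∀ t ∈ Icc (0 : ℝ) 1, HasDerivAt
      (fun t => f (x + t • v) - f x - t * inner ℝ (gradient f x) v)
      (inner ℝ (gradient f (x + t • v) - gradient f x) v) t := fun t ht => by
    have hpath : HasDerivAt (fun t : ℝ => x + t • v) v t := by
      simpa using ((hasDerivAt_id t).smul_const v).const_add x
    have := ((hf _ (hseg t ht)).hasFDerivAt.comp_hasDerivAt t hpath).sub_const (f x)
      |>.sub (hasDerivAt_mul_const (inner ℝ (gradient f x) v))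
    exact this.congr_deriv (by simp [inner_sub_left, inner_gradient_left])
  have hbound : ∀ t ∈ Ico (0 : ℝ) 1,
      |inner ℝ (gradient f (x + t • v) - gradient f x) v| ≤ (L * ‖v‖ ^ 2) * t := fun t ht => by
    have hlipt : ‖gradient f (x + t • v) - gradient f x‖ ≤ L * (t * ‖v‖) := by
      simpa [norm_smul, abs_of_nonneg ht.1] using
        hlip.norm_sub_le (hseg t (Ico_subset_Icc_self ht)) hx
    calc |inner ℝ (gradient f (x + t • v) - gradient f x) v|
        ≤ ‖gradient f (x + t • v) - gradient f x‖ * ‖v‖ := abs_real_inner_le_norm _ _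
      _ ≤ L * (t * ‖v‖) * ‖v‖ := by gcongr
      _ = (L * ‖v‖ ^ 2) * t := by ring
  have := abs_le_half_of_abs_deriv_le_mul hderiv (by simp) hbound
  simpa [mul_div_right_comm] using this

theorem EuclideanSpace.norm_le_sqrt_card_mul {ι : Type*} [Fintype ι] {x : EuclideanSpace ℝ ι}
    {c : ℝ} (hc : 0 ≤ c) (hx : ∀ i, |x i| ≤ c) : ‖x‖ ≤ √(Fintype.card ι) * c := by
  calc ‖x‖ = √(∑ i, ‖x i‖ ^ 2) := EuclideanSpace.norm_eq x
    _ ≤ √(∑ _ : ι, c ^ 2) := by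
      gcongr with i
      rw [Real.norm_eq_abs]
      exact hx i
    _ = √(Fintype.card ι) * c := by
      rw [Finset.sum_const, Finset.card_univ, nsmul_eq_mul, Real.sqrt_mul (Nat.cast_nonneg _),
        Real.sqrt_sq hc]

theorem Matrix.isUnit_of_rank_eq_card {m K : Type*} [Fintype m] [DecidableEq m] [Field K]
    {A : Matrix m m K} (h : A.rank = Fintype.card m) : IsUnit A := by
  have hrange : LinearMap.range A.mulVecLin = ⊤ :=
    Submodule.eq_top_of_finrank_eq (by simpa [Matrix.rank] using h)
  exact mulVec_surjective_iff_isUnit.mp (LinearMap.range_eq_top.mp hrange)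

theorem norm_vecE_mulVec_le {m n : ℕ} (A : Matrix (Fin m) (Fin n) ℝ) (x : Fin n → ℝ) :
    ‖vecE (A *ᵥ x)‖ ≤ l2opNorm A * ‖vecE x‖ :=
  (LinearMap.toContinuousLinearMap (Matrix.toEuclideanLin A)).le_opNorm (vecE x)

theorem l2opNorm_smul {m n : ℕ} (c : ℝ) (A : Matrix (Fin m) (Fin n) ℝ) :
    l2opNorm (c • A) = |c| * l2opNorm A := by
  rw [l2opNorm, l2opNorm, map_smul, map_smul]
  exact norm_smul c _

theorem Matrix.inv_mul_smul_mul_transpose_smul {m ι K : Type*} [Fintype m] [DecidableEq m]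
    [Fintype ι] [Field K] {S : Matrix m ι K} (hS : IsUnit (S * Sᵀ).det) (c : K) :
    ((c • S) * (c • S)ᵀ)⁻¹ * (c • S) = c⁻¹ • ((S * Sᵀ)⁻¹ * S) := by
  rcases eq_or_ne c 0 with rfl | hc
  · simp -- both sides vanish, since `0⁻¹ = 0`
  have hgram : (c • S) * (c • S)ᵀ = (c * c) • (S * Sᵀ) := by
    rw [transpose_smul, Matrix.smul_mul, Matrix.mul_smul, smul_smul]
  have hinv : ((c * c) • (S * Sᵀ))⁻¹ = (c * c)⁻¹ • (S * Sᵀ)⁻¹ :=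
    inv_eq_left_inv (by
      rw [Matrix.smul_mul, Matrix.mul_smul, smul_smul, nonsing_inv_mul _ hS,
        inv_mul_cancel₀ (mul_ne_zero hc hc), one_smul])
  rw [hgram, hinv, Matrix.smul_mul, Matrix.mul_smul, smul_smul, mul_inv, mul_assoc,
    inv_mul_cancel₀ hc, mul_one]

theorem norm_vecE_mulVec_sub_le_of_mul_transpose_eq_one {m N : ℕ}
    {M S : Matrix (Fin m) (Fin N) ℝ} (hMS : M * Sᵀ = 1) (δ : Fin N → ℝ)
    (g : EuclideanSpace ℝ (Fin m)) :
    ‖vecE (M *ᵥ δ) - g‖ ≤ l2opNorm M * ‖vecE (δ - Sᵀ *ᵥ g.ofLp)‖ := by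
  have : M *ᵥ (δ - Sᵀ *ᵥ g.ofLp) = M *ᵥ δ - g.ofLp := by
    rw [mulVec_sub, mulVec_mulVec, hMS, one_mulVec]
  simpa [this, vecE] using norm_vecE_mulVec_le M (δ - Sᵀ *ᵥ g.ofLp)

theorem inner_vecE_col_eq_transpose_mulVec {m N : ℕ} (g : EuclideanSpace ℝ (Fin m))
    (S : Matrix (Fin m) (Fin N) ℝ) (j : Fin N) :
    inner ℝ g (vecE (fun i => S i j)) = (Sᵀ *ᵥ g.ofLp) j := by
  simp [vecE, PiLp.inner_apply, mulVec, dotProduct]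

theorem gsg_classical_error_bound
    (n N : ℕ)
    (S : Matrix (Fin n) (Fin N) ℝ) (hrank : S.rank = n)
    (ΔS : ℝ) (hΔS : ΔS = ⨆ j : Fin N, ‖vecE (fun i => S i j)‖)
    (x0 : EuclideanSpace ℝ (Fin n)) (f : EuclideanSpace ℝ (Fin n) → ℝ)
    (U : Set (EuclideanSpace ℝ (Fin n))) (hU : IsOpen U)
    (hsub : Metric.closedBall x0 ΔS ⊆ U)
    (hf : ContDiffOn ℝ 2 f U)
    (L : NNReal)
    (hlip : LipschitzOnWith L (gradient f) (Metric.closedBall x0 ΔS)) :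
    ‖vecE (Matrix.mulVec ((S * S.transpose)⁻¹ * S)
        (fun j => f (x0 + vecE (fun i => S i j)) - f x0)) - gradient f x0‖
      ≤ (Real.sqrt N / 2) * (L : ℝ) *
          l2opNorm (((ΔS⁻¹ • S) * (ΔS⁻¹ • S).transpose)⁻¹ * (ΔS⁻¹ • S)) * ΔS := by
  set δ : Fin N → ℝ := fun j => f (x0 + vecE (fun i => S i j)) - f x0
  set g := (gradient f x0).ofLp
  have hcol (j : Fin N) : ‖vecE (fun i => S i j)‖ ≤ ΔS :=
    hΔS ▸ le_ciSup (f := fun j => ‖vecE (fun i => S i j)‖) (Set.finite_range _).bddAbove j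
  have hΔS0 : 0 ≤ ΔS := hΔS ▸ Real.iSup_nonneg fun _ => norm_nonneg _
  have hdet : IsUnit (S * Sᵀ).det := (isUnit_iff_isUnit_det _).mp <|
    isUnit_of_rank_eq_card (by rw [rank_self_mul_transpose, hrank, Fintype.card_fin])
  have hdiff : ∀ y ∈ Metric.closedBall x0 ΔS, DifferentiableAt ℝ f y := fun y hy =>
    (hf.differentiableOn two_ne_zero).differentiableAt (hU.mem_nhds (hsub hy))
  have htaylor (j : Fin N) : |δ j - (Sᵀ *ᵥ g) j| ≤ L / 2 * ΔS ^ 2 := by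
    rw [← inner_vecE_col_eq_transpose_mulVec]
    refine (abs_sub_sub_inner_gradient_le (convex_closedBall x0 ΔS) hdiff hlip
      (Metric.mem_closedBall_self hΔS0) ?_).trans ?_
    · simpa using hcol j
    · gcongr
      exact hcol j
  rw [inv_mul_smul_mul_transpose_smul hdet, l2opNorm_smul, inv_inv, abs_of_nonneg hΔS0]
  calc _ ≤ l2opNorm ((S * Sᵀ)⁻¹ * S) * ‖vecE (δ - Sᵀ *ᵥ g)‖ :=
        norm_vecE_mulVec_sub_le_of_mul_transpose_eq_one
          (by rw [Matrix.mul_assoc, nonsing_inv_mul _ hdet]) _ _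
    _ ≤ l2opNorm ((S * Sᵀ)⁻¹ * S) * (√N * (L / 2 * ΔS ^ 2)) := by
        gcongr
        · exact norm_nonneg _
        · simpa using EuclideanSpace.norm_le_sqrt_card_mul (x := vecE (δ - Sᵀ *ᵥ g))
            (by positivity) htaylor
    _ = _ := by ring

end
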